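/- (Corollary 3, item 3.) Let Σ be a p×p symmetric positive definite real matrix (indexed by pairs) and let a > 0. If K minimizes d(K' : Σ) over all separable positive definite p×p matrices K', then a·K is separable positive definite and minimizes d(K' : a·Σ) over all separable positive definite p×p matrices K'. -/

import Mathlib

open Matrix BigOperators Filter

/-- The separable (Kronecker) product `M2 ⊛ M1`: entry at `((i,j),(i',j'))` is
`M1 i i' * M2 j j'`. -/
noncomputable def sep {p1 p2 : ℕ} (M1 : Matrix (Fin p1) (Fin p1) ℝ)
    (M2 : Matrix (Fin p2) (Fin p2) ℝ) :
    Matrix (Fin p1 × Fin p2) (Fin p1 × Fin p2) ℝ :=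
  fun x y => M1 x.1 y.1 * M2 x.2 y.2

/-- A `p × p` matrix is separable positive definite if it is the separable product of
two symmetric positive definite matrices. -/
def SepPD {p1 p2 : ℕ} (K : Matrix (Fin p1 × Fin p2) (Fin p1 × Fin p2) ℝ) : Prop :=
  ∃ (S1 : Matrix (Fin p1) (Fin p1) ℝ) (S2 : Matrix (Fin p2) (Fin p2) ℝ),
    S1.PosDef ∧ S2.PosDef ∧ K = sep S1 S2

/-- The divergence `d(K : S) = log det K + trace (K⁻¹ S)`. -/
noncomputable def dvg {ι : Type*} [Fintype ι] [DecidableEq ι] (K S : Matrix ι ι ℝ) : ℝ :=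
  Real.log K.det + (K⁻¹ * S).trace

/-- `P1 S B` has entries `∑_{j,j'} B j j' * S (i,j) (i',j')`. -/
noncomputable def P1 {p1 p2 : ℕ} (S : Matrix (Fin p1 × Fin p2) (Fin p1 × Fin p2) ℝ)
    (B : Matrix (Fin p2) (Fin p2) ℝ) : Matrix (Fin p1) (Fin p1) ℝ :=
  fun i i' => ∑ j, ∑ j', B j j' * S (i, j) (i', j')

/-- `P2 S A` has entries `∑_{i,i'} A i i' * S (i,j) (i',j')`. -/
noncomputable def P2 {p1 p2 : ℕ} (S : Matrix (Fin p1 × Fin p2) (Fin p1 × Fin p2) ℝ)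
    (A : Matrix (Fin p1) (Fin p1) ℝ) : Matrix (Fin p2) (Fin p2) ℝ :=
  fun j j' => ∑ i, ∑ i', A i i' * S (i, j) (i', j')

/-! Scaling by `a > 0` maps the separable positive definite matrices onto themselves (absorb `a`
into one factor), and `d(aK : aΣ) = p log a + d(K : Σ)` since `(aK)⁻¹(aΣ) = K⁻¹Σ`. So the objective
only shifts by a constant, and its minimizers scale with `Σ`. -/

open scoped Kronecker

theorem sep_eq_kronecker {p1 p2 : ℕ} (M1 : Matrix (Fin p1) (Fin p1) ℝ)
    (M2 : Matrix (Fin p2) (Fin p2) ℝ) : sep M1 M2 = M1 ⊗ₖ M2 :=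
  rfl

theorem SepPD.det_pos {p1 p2 : ℕ} {K : Matrix (Fin p1 × Fin p2) (Fin p1 × Fin p2) ℝ}
    (hK : SepPD K) : 0 < K.det := by
  obtain ⟨S1, S2, h1, h2, rfl⟩ := hK
  rw [sep_eq_kronecker, det_kronecker]
  exact mul_pos (pow_pos h1.det_pos _) (pow_pos h2.det_pos _)

theorem SepPD.smul {p1 p2 : ℕ} {K : Matrix (Fin p1 × Fin p2) (Fin p1 × Fin p2) ℝ}
    (hK : SepPD K) {c : ℝ} (hc : 0 < c) : SepPD (c • K) := by
  obtain ⟨S1, S2, h1, h2, rfl⟩ := hK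
  exact ⟨c • S1, S2, h1.smul hc, h2, by rw [sep_eq_kronecker, sep_eq_kronecker, smul_kronecker]⟩

theorem dvg_smul_smul {ι : Type*} [Fintype ι] [DecidableEq ι] {M : Matrix ι ι ℝ}
    (hM : M.det ≠ 0) (S : Matrix ι ι ℝ) {c : ℝ} (hc : c ≠ 0) :
    dvg (c • M) (c • S) = Fintype.card ι * Real.log c + dvg M S := by
  have hinv : (c • M)⁻¹ = c⁻¹ • M⁻¹ := M.inv_smul' (Units.mk0 c hc) hM.isUnit
  rw [dvg, dvg, hinv, det_smul, smul_mul, Matrix.mul_smul, smul_smul, inv_mul_cancel₀ hc,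
    one_smul, Real.log_mul (pow_ne_zero _ hc) hM, Real.log_pow]
  ring

theorem stmt7_general (p1 p2 : ℕ)
    (S : Matrix (Fin p1 × Fin p2) (Fin p1 × Fin p2) ℝ)
    (a : ℝ) (ha : 0 < a)
    (K : Matrix (Fin p1 × Fin p2) (Fin p1 × Fin p2) ℝ) (hKsep : SepPD K)
    (hmin : ∀ K', SepPD K' → dvg K S ≤ dvg K' S) :
    SepPD (a • K) ∧ ∀ K', SepPD K' → dvg (a • K) (a • S) ≤ dvg K' (a • S) := by
  refine ⟨hKsep.smul ha, fun K' hK' => ?_⟩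
  have hd {K₀} (h : SepPD K₀) := dvg_smul_smul h.det_pos.ne' S ha.ne'
  have hK'a : SepPD (a⁻¹ • K') := hK'.smul (inv_pos.mpr ha)
  calc dvg (a • K) (a • S) = _ + dvg K S := hd hKsep
    _ ≤ _ + dvg (a⁻¹ • K') S := add_le_add_right (hmin _ hK'a) _
    _ = dvg (a • a⁻¹ • K') (a • S) := (hd hK'a).symm
    _ = dvg K' (a • S) := by rw [smul_inv_smul₀ ha.ne']

theorem stmt7 (p1 p2 : ℕ) (hp1 : 0 < p1) (hp2 : 0 < p2)
    (S : Matrix (Fin p1 × Fin p2) (Fin p1 × Fin p2) ℝ) (hS : S.PosDef)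
    (a : ℝ) (ha : 0 < a)
    (K : Matrix (Fin p1 × Fin p2) (Fin p1 × Fin p2) ℝ) (hKsep : SepPD K)
    (hmin : ∀ K', SepPD K' → dvg K S ≤ dvg K' S) :
    SepPD (a • K) ∧ ∀ K', SepPD K' → dvg (a • K) (a • S) ≤ dvg K' (a • S) :=
  stmt7_general p1 p2 S a ha K hKsep hmin
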